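/- arXiv:2510.12641 — 10 statements merged into one kernel-verified Lean document; each statement's English description precedes it below -/
import Mathlib

section
/- Let λ ≤ μ be positive integers and let n be a positive integer. A (λ,μ)-partition of an n-element set exists if and only if n ≤ ⌊n/λ⌋·μ. -/
open Finset

variable {α : Type*} [Fintype α] [DecidableEq α]

/-- `π` encodes a partition of the agent set: `π i` is the coalition containing `i`. -/
def IsPartition (π : α → Finset α) : Prop :=
  (∀ i, i ∈ π i) ∧ ∀ i j, j ∈ π i → π j = π i

/-- A `(lam,mu)`-partition: a partition all of whose coalitions have size between
`lam` and `mu`. -/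
def IsSizedPartition (lam mu : ℕ) (π : α → Finset α) : Prop :=
  IsPartition π ∧ ∀ i, lam ≤ (π i).card ∧ (π i).card ≤ mu

/-- Additively separable utility of agent `i` in coalition `C`. -/
noncomputable def utility (v : α → α → ℝ) (i : α) (C : Finset α) : ℝ :=
  ∑ j ∈ C.erase i, v i j

/-- Social welfare of a partition. -/
noncomputable def SW (v : α → α → ℝ) (π : α → Finset α) : ℝ :=
  ∑ i, utility v i (π i)

/-- `π'` results from partition `π` by a single-agent deviation of agent `i`. -/
def IsDeviation (π π' : α → Finset α) (i : α) : Prop :=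
  IsPartition π ∧ IsPartition π' ∧ π' i ≠ π i ∧
    ∀ j, j ≠ i → (π j).erase i = (π' j).erase i

/-- A Nash deviation: a single-agent deviation strictly improving the deviator. -/
def IsNashDev (v : α → α → ℝ) (π π' : α → Finset α) (i : α) : Prop :=
  IsDeviation π π' i ∧ utility v i (π i) < utility v i (π' i)

/-- No member of `i`'s abandoned coalition is worse off. -/
def ContractOK (v : α → α → ℝ) (π π' : α → Finset α) (i : α) : Prop :=
  ∀ j ∈ (π i).erase i, utility v j (π j) ≤ utility v j (π' j)

/-- No member of `i`'s newly joined coalition is worse off. -/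
def IndivOK (v : α → α → ℝ) (π π' : α → Finset α) (i : α) : Prop :=
  ∀ j ∈ (π' i).erase i, utility v j (π j) ≤ utility v j (π' j)

/-- A `(lam,mu)`-permissible deviation: the deviator ends up in a coalition
within the size bounds. -/
def Permissible (lam mu : ℕ) (π' : α → Finset α) (i : α) : Prop :=
  lam ≤ (π' i).card ∧ (π' i).card ≤ mu

def IsNS (lam mu : ℕ) (v : α → α → ℝ) (π : α → Finset α) : Prop :=
  IsSizedPartition lam mu π ∧
    ¬ ∃ i π', IsNashDev v π π' i ∧ Permissible lam mu π' i

def IsNSstar (lam mu : ℕ) (v : α → α → ℝ) (π : α → Finset α) : Prop :=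
  IsSizedPartition lam mu π ∧
    ¬ ∃ i π', IsNashDev v π π' i ∧ IsSizedPartition lam mu π'

def IsIS (lam mu : ℕ) (v : α → α → ℝ) (π : α → Finset α) : Prop :=
  IsSizedPartition lam mu π ∧
    ¬ ∃ i π', (IsNashDev v π π' i ∧ IndivOK v π π' i) ∧ Permissible lam mu π' i

def IsISstar (lam mu : ℕ) (v : α → α → ℝ) (π : α → Finset α) : Prop :=
  IsSizedPartition lam mu π ∧
    ¬ ∃ i π', (IsNashDev v π π' i ∧ IndivOK v π π' i) ∧ IsSizedPartition lam mu π'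

def IsCNS (lam mu : ℕ) (v : α → α → ℝ) (π : α → Finset α) : Prop :=
  IsSizedPartition lam mu π ∧
    ¬ ∃ i π', (IsNashDev v π π' i ∧ ContractOK v π π' i) ∧ Permissible lam mu π' i

def IsCNSstar (lam mu : ℕ) (v : α → α → ℝ) (π : α → Finset α) : Prop :=
  IsSizedPartition lam mu π ∧
    ¬ ∃ i π', (IsNashDev v π π' i ∧ ContractOK v π π' i) ∧ IsSizedPartition lam mu π'

def IsCIS (lam mu : ℕ) (v : α → α → ℝ) (π : α → Finset α) : Prop :=
  IsSizedPartition lam mu π ∧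
    ¬ ∃ i π', (IsNashDev v π π' i ∧ ContractOK v π π' i ∧ IndivOK v π π' i) ∧
      Permissible lam mu π' i

def IsCISstar (lam mu : ℕ) (v : α → α → ℝ) (π : α → Finset α) : Prop :=
  IsSizedPartition lam mu π ∧
    ¬ ∃ i π', (IsNashDev v π π' i ∧ ContractOK v π π' i ∧ IndivOK v π π' i) ∧
      IsSizedPartition lam mu π'

lemma exists_blocks {β : Type*} [DecidableEq β] (lam mu : ℕ) (hlam : 0 < lam)
    (hlm : lam ≤ mu) :
    ∀ n (S : Finset β), S.card = n → n ≤ (n / lam) * mu →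
    ∃ P : Finset (Finset β),
      (∀ C ∈ P, lam ≤ C.card ∧ C.card ≤ mu) ∧
      (∀ C ∈ P, ∀ D ∈ P, C ≠ D → Disjoint C D) ∧
      P.biUnion id = S := by
  intro n
  induction n using Nat.strong_induction_on with
  | _ n ih =>
    intro S hS hcond
    rcases Nat.eq_zero_or_pos n with hn0 | hn0
    · refine ⟨∅, by simp, by simp, ?_⟩
      simp [Finset.card_eq_zero.mp (hS.trans hn0)]
    have hq1 : 1 ≤ n / lam := by
      rcases Nat.eq_zero_or_pos (n / lam) with h | h
      · rw [h, Nat.zero_mul] at hcond; omega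
      · exact h
    have hlamn : lam ≤ n := (Nat.one_le_div_iff hlam).mp hq1
    by_cases hmun : n ≤ mu
    · refine ⟨{S}, ?_, ?_, by simp⟩
      · intro C hC; simp only [Finset.mem_singleton] at hC; subst hC; omega
      · intro C hC D hD hCD
        simp only [Finset.mem_singleton] at hC hD; exact absurd (hC.trans hD.symm) hCD
    · push_neg at hmun
      set q := n / lam with hqdef
      set r := n % lam with hrdef
      have hnr : q * lam + r = n := by
        simpa [hqdef, hrdef, Nat.mul_comm] using Nat.div_add_mod n lam
      have hrlt : r < lam := Nat.mod_lt _ hlam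
      have hmul1 : (q - 1) * lam ≤ (q - 1) * mu := Nat.mul_le_mul_left _ hlm
      have hmul2 : (q - 1) * lam + lam = q * lam := by
        have : q - 1 + 1 = q := by omega
        calc (q - 1) * lam + lam = (q - 1 + 1) * lam := by ring
        _ = q * lam := by rw [this]
      have hmul3 : (q - 1) * mu + mu = q * mu := by
        have : q - 1 + 1 = q := by omega
        calc (q - 1) * mu + mu = (q - 1 + 1) * mu := by ring
        _ = q * mu := by rw [this]
      have hcond' : n ≤ q * mu := hcond
      set s := max lam (n - (q - 1) * mu) with hsdef
      have hs1 : lam ≤ s := le_max_left _ _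
      have hs2 : s ≤ mu := by omega
      have hs3 : s ≤ n := by omega
      have hs4 : n - (q - 1) * mu ≤ s := le_max_right _ _
      have hns1 : (q - 1) * lam ≤ n - s := by omega
      have hns2 : n - s < q * lam := by omega
      have hdiv : (n - s) / lam = q - 1 := by
        apply Nat.div_eq_of_lt_le
        · exact hns1
        · calc n - s < q * lam := hns2
          _ = (q - 1 + 1) * lam := by congr 1; omega
      obtain ⟨T, hTS, hTcard⟩ := Finset.exists_subset_card_eq (s := S) (n := s) (by omega)
      have hSd : (S \ T).card = n - s := by
        rw [Finset.card_sdiff_of_subset hTS]; omega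
      obtain ⟨P', hP'1, hP'2, hP'3⟩ := ih (n - s) (by omega) (S \ T) hSd (by
        rw [hdiv]; omega)
      refine ⟨insert T P', ?_, ?_, ?_⟩
      · intro C hC
        rcases Finset.mem_insert.mp hC with h | h
        · subst h; omega
        · exact hP'1 C h
      · have hdisjT : ∀ D ∈ P', Disjoint T D := by
          intro D hD
          have hDsub : D ⊆ S \ T := by
            intro x hx
            rw [← hP'3]
            exact Finset.mem_biUnion.mpr ⟨D, hD, hx⟩
          exact (Finset.disjoint_sdiff.mono_right hDsub)
        intro C hC D hD hCD
        rcases Finset.mem_insert.mp hC with h | h <;>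
          rcases Finset.mem_insert.mp hD with h' | h'
        · exact absurd (h.trans h'.symm) hCD
        · subst h; exact hdisjT D h'
        · subst h'; exact (hdisjT C h).symm
        · exact hP'2 C h D h' hCD
      · rw [Finset.biUnion_insert, hP'3]
        simp only [id]
        rw [Finset.union_sdiff_of_subset hTS]

/-- a `(lam,mu)`-partition of an `n`-element set exists iff
`n ≤ ⌊n/lam⌋ * mu`. -/
theorem statement0 (lam mu n : ℕ) (hlam : 0 < lam) (hlm : lam ≤ mu) (hn : 0 < n) :
    (∃ π : Fin n → Finset (Fin n), IsSizedPartition lam mu π) ↔ n ≤ (n / lam) * mu := by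
  constructor
  · rintro ⟨π, ⟨⟨hmem, hpart⟩, hsize⟩⟩
    set P : Finset (Finset (Fin n)) := Finset.univ.image π with hP
    have hdisj : ∀ C ∈ P, ∀ D ∈ P, C ≠ D → Disjoint C D := by
      intro C hC D hD hCD
      obtain ⟨i, _, rfl⟩ := Finset.mem_image.mp hC
      obtain ⟨j, _, rfl⟩ := Finset.mem_image.mp hD
      rw [Finset.disjoint_left]
      intro x hxi hxj
      exact hCD ((hpart i x hxi).symm.trans (hpart j x hxj))
    have hcover : P.biUnion id = Finset.univ := by
      apply Finset.eq_univ_of_forall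
      intro x
      exact Finset.mem_biUnion.mpr ⟨π x, Finset.mem_image.mpr ⟨x, Finset.mem_univ _, rfl⟩,
        hmem x⟩
    have hsum : ∑ C ∈ P, C.card = n := by
      have h := Finset.card_biUnion (s := P) (t := id) (fun C hC D hD h => hdisj C hC D hD h)
      rw [hcover, Finset.card_univ, Fintype.card_fin] at h
      simpa [id] using h.symm
    have hbound : ∀ C ∈ P, lam ≤ C.card ∧ C.card ≤ mu := by
      intro C hC
      obtain ⟨i, _, rfl⟩ := Finset.mem_image.mp hC
      exact hsize i
    have hlow : P.card * lam ≤ n := by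
      calc P.card * lam = ∑ _C ∈ P, lam := by rw [Finset.sum_const, smul_eq_mul, mul_comm]
      _ ≤ ∑ C ∈ P, C.card := Finset.sum_le_sum fun C hC => (hbound C hC).1
      _ = n := hsum
    have hhigh : n ≤ P.card * mu := by
      calc n = ∑ C ∈ P, C.card := hsum.symm
      _ ≤ ∑ _C ∈ P, mu := Finset.sum_le_sum fun C hC => (hbound C hC).2
      _ = P.card * mu := by rw [Finset.sum_const, smul_eq_mul]
    have hcardle : P.card ≤ n / lam := (Nat.le_div_iff_mul_le hlam).mpr hlow
    exact hhigh.trans (Nat.mul_le_mul_right _ hcardle)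
  · intro hcond
    obtain ⟨P, hP1, hP2, hP3⟩ := exists_blocks lam mu hlam hlm n
      (Finset.univ : Finset (Fin n)) (by simp) hcond
    have hmem : ∀ i : Fin n, ∃ C, C ∈ P ∧ i ∈ C := by
      intro i
      have : i ∈ P.biUnion id := hP3 ▸ Finset.mem_univ i
      obtain ⟨C, hC, hiC⟩ := Finset.mem_biUnion.mp this
      exact ⟨C, hC, hiC⟩
    refine ⟨fun i => (hmem i).choose, ⟨⟨fun i => (hmem i).choose_spec.2, ?_⟩, ?_⟩⟩
    · intro i j hj
      by_contra hne
      have hd := hP2 _ (hmem j).choose_spec.1 _ (hmem i).choose_spec.1 hne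
      exact Finset.disjoint_left.mp hd (hmem j).choose_spec.2 hj
    · intro i
      exact hP1 _ (hmem i).choose_spec.1
end

section
/- In a symmetric ASHG, if a partition π' is obtained from a partition π by a single-agent deviation of agent i, then SW(π') − SW(π) = 2·(u_i(π') − u_i(π)). -/
open Finset

variable {α : Type*} [Fintype α] [DecidableEq α]

lemma util_split (v : α → α → ℝ) (i j : α) (hj : j ≠ i) (C : Finset α) :
    utility v j C = utility v j (C.erase i) + (if i ∈ C then v j i else 0) := by
  by_cases hi : i ∈ C
  · simp only [hi, if_true, utility]
    rw [show (C.erase i).erase j = (C.erase j).erase i from Finset.erase_right_comm,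
      add_comm]
    exact (Finset.add_sum_erase _ _ (Finset.mem_erase.mpr ⟨hj.symm, hi⟩)).symm
  · simp [utility, hi, Finset.erase_eq_of_notMem hi]

lemma mem_iff_of_partition {π : α → Finset α} (hπ : IsPartition π) (i j : α) :
    i ∈ π j ↔ j ∈ π i := by
  constructor <;> intro h
  · rw [hπ.2 j i h]; exact hπ.1 j
  · rw [hπ.2 i j h]; exact hπ.1 i

lemma side_sum (v : α → α → ℝ) (hsym : ∀ i j, i ≠ j → v i j = v j i)
    {π : α → Finset α} (hπ : IsPartition π) (i : α) :
    ∑ j ∈ Finset.univ.erase i, (if i ∈ π j then v j i else 0) = utility v i (π i) := by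
  rw [← Finset.sum_filter]
  have hf : (Finset.univ.erase i).filter (fun j => i ∈ π j) = (π i).erase i := by
    ext j
    simp only [Finset.mem_filter, Finset.mem_erase, Finset.mem_univ, true_and,
      mem_iff_of_partition hπ i j]
    tauto
  rw [hf, utility]
  exact Finset.sum_congr rfl fun j hj =>
    (hsym i j (Finset.mem_erase.mp hj).1.symm).symm

/-- in a symmetric ASHG, a single-agent deviation by `i` changes the
social welfare by twice the change of `i`'s utility. -/
theorem statement3 {α : Type*} [Fintype α] [DecidableEq α] (v : α → α → ℝ)
    (hsym : ∀ i j, i ≠ j → v i j = v j i)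
    (π π' : α → Finset α) (i : α) (hdev : IsDeviation π π' i) :
    SW v π' - SW v π = 2 * (utility v i (π' i) - utility v i (π i)) := by
  obtain ⟨hπ, hπ', hne, her⟩ := hdev
  have key : ∀ j, j ≠ i → utility v j (π' j) - utility v j (π j) =
      (if i ∈ π' j then v j i else 0) - (if i ∈ π j then v j i else 0) := by
    intro j hj
    rw [util_split v i j hj (π j), util_split v i j hj (π' j), ← her j hj]
    ring
  have h1 : SW v π' - SW v π = ∑ j, (utility v j (π' j) - utility v j (π j)) := by
    rw [SW, SW, ← Finset.sum_sub_distrib]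
  rw [h1, ← Finset.add_sum_erase _ _ (Finset.mem_univ i)]
  rw [Finset.sum_congr rfl (fun j hj => key j (Finset.mem_erase.mp hj).1),
    Finset.sum_sub_distrib, side_sum v hsym hπ' i, side_sum v hsym hπ i]
  ring
end

section
/- Let λ ≤ μ be positive integers. In a symmetric ASHG, every (λ,μ)-partition that maximizes social welfare among all (λ,μ)-partitions is an NS* (λ,μ)-partition. -/
open Finset

variable {α : Type*} [Fintype α] [DecidableEq α]

lemma mem_symm_part {π : α → Finset α} (hP : IsPartition π) {i j : α} :
    j ∈ π i ↔ i ∈ π j := by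
  constructor
  · intro h; rw [hP.2 i j h]; exact hP.1 i
  · intro h; rw [hP.2 j i h]; exact hP.1 j

lemma util_diff (v : α → α → ℝ) (π π' : α → Finset α) (i j : α) (hj : j ≠ i)
    (h : (π j).erase i = (π' j).erase i) :
    utility v j (π' j) - utility v j (π j)
      = (if i ∈ π' j then v j i else 0) - (if i ∈ π j then v j i else 0) := by
  have key : ∀ C : Finset α, ∑ k ∈ C.erase j, v j k
      = (∑ k ∈ (C.erase j).erase i, v j k) + (if i ∈ C then v j i else 0) := by
    intro C
    by_cases hi : i ∈ C
    · rw [if_pos hi, Finset.sum_erase_add]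
      exact Finset.mem_erase.2 ⟨fun hh => hj hh.symm, hi⟩
    · rw [if_neg hi, Finset.erase_eq_of_notMem (fun hh => hi (Finset.mem_of_mem_erase hh)),
        add_zero]
  have hee : ((π j).erase j).erase i = ((π' j).erase j).erase i := by
    rw [Finset.erase_right_comm, h, Finset.erase_right_comm]
  rw [utility, utility, key (π j), key (π' j), hee]
  ring

lemma sum_ind (v : α → α → ℝ) (hsym : ∀ i j, i ≠ j → v i j = v j i)
    {σ : α → Finset α} (hP : IsPartition σ) (i : α) :
    ∑ j ∈ Finset.univ.erase i, (if i ∈ σ j then v j i else 0)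
      = utility v i (σ i) := by
  rw [utility, ← Finset.sum_filter]
  have hset : (Finset.univ.erase i).filter (fun j => i ∈ σ j) = (σ i).erase i := by
    ext j
    simp only [Finset.mem_filter, Finset.mem_erase, Finset.mem_univ, and_true]
    constructor
    · rintro ⟨hne, hm⟩; exact ⟨hne, (mem_symm_part hP).2 hm⟩
    · rintro ⟨hne, hm⟩; exact ⟨hne, (mem_symm_part hP).1 hm⟩
  rw [hset]
  exact Finset.sum_congr rfl fun j hj =>
    hsym j i (Finset.mem_erase.1 hj).1

/-- in a symmetric ASHG, every `(lam,mu)`-partition maximizing social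
welfare among `(lam,mu)`-partitions is NS*. -/
theorem statement4 {α : Type*} [Fintype α] [DecidableEq α] (lam mu : ℕ)
    (hlam : 0 < lam) (hlm : lam ≤ mu) (v : α → α → ℝ)
    (hsym : ∀ i j, i ≠ j → v i j = v j i)
    (π : α → Finset α) (hπ : IsSizedPartition lam mu π)
    (hmax : ∀ σ : α → Finset α, IsSizedPartition lam mu σ → SW v σ ≤ SW v π) :
    IsNSstar lam mu v π := by
  refine ⟨hπ, ?_⟩
  rintro ⟨i, π', ⟨⟨hPπ, hPπ', hne, hera⟩, hlt⟩, hsized'⟩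
  have hΔ : 0 < utility v i (π' i) - utility v i (π i) := by linarith
  have hdiff : SW v π' - SW v π
      = 2 * (utility v i (π' i) - utility v i (π i)) := by
    have hsum : SW v π' - SW v π
        = ∑ j : α, (utility v j (π' j) - utility v j (π j)) := by
      rw [SW, SW, Finset.sum_sub_distrib]
    rw [hsum, ← Finset.sum_erase_add _ _ (Finset.mem_univ i)]
    have h1 : ∑ j ∈ Finset.univ.erase i, (utility v j (π' j) - utility v j (π j))
        = ∑ j ∈ Finset.univ.erase i,
            ((if i ∈ π' j then v j i else 0) - (if i ∈ π j then v j i else 0)) := by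
      refine Finset.sum_congr rfl fun j hj => ?_
      exact util_diff v π π' i j (Finset.mem_erase.1 hj).1 (hera j (Finset.mem_erase.1 hj).1)
    rw [h1, Finset.sum_sub_distrib, sum_ind v hsym hPπ' i, sum_ind v hsym hPπ i]
    ring
  have := hmax π' hsized'
  linarith
end

section
/- Let λ ≤ μ be positive integers. In any ASHG, every (λ,μ)-partition that maximizes social welfare among all (λ,μ)-partitions is a CIS* (λ,μ)-partition. -/
open Finset

variable {α : Type*} [Fintype α] [DecidableEq α]

/-- every `(lam,mu)`-partition maximizing social welfare among
`(lam,mu)`-partitions is CIS*. -/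
theorem statement7 {α : Type*} [Fintype α] [DecidableEq α] (lam mu : ℕ)
    (hlam : 0 < lam) (hlm : lam ≤ mu) (v : α → α → ℝ)
    (π : α → Finset α) (hπ : IsSizedPartition lam mu π)
    (hmax : ∀ σ : α → Finset α, IsSizedPartition lam mu σ → SW v σ ≤ SW v π) :
    IsCISstar lam mu v π := by
  refine ⟨hπ, ?_⟩
  rintro ⟨i, π', ⟨⟨⟨hp, hp', hne, herase⟩, hlt⟩, hC, hI⟩, hs'⟩
  have hle : ∀ j, utility v j (π j) ≤ utility v j (π' j) := by
    intro j
    by_cases hj : j = i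
    · subst hj; exact hlt.le
    · by_cases h1 : j ∈ π i
      · exact hC j (Finset.mem_erase.2 ⟨hj, h1⟩)
      · by_cases h2 : j ∈ π' i
        · exact hI j (Finset.mem_erase.2 ⟨hj, h2⟩)
        · have hij : i ∉ π j := fun h => h1 (by rw [hp.2 j i h]; exact hp.1 j)
          have hij' : i ∉ π' j := fun h => h2 (by rw [hp'.2 j i h]; exact hp'.1 j)
          have : π j = π' j := by
            rw [← Finset.erase_eq_of_notMem hij, ← Finset.erase_eq_of_notMem hij',
              herase j hj]
          rw [this]
  have hlt' : SW v π < SW v π' := by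
    apply Finset.sum_lt_sum (fun j _ => hle j) ⟨i, Finset.mem_univ i, hlt⟩
  exact absurd (hmax π' hs') (not_le.2 hlt')
end

section
/- Let λ ≤ μ be positive integers. Every ASHG that admits a (λ,μ)-partition also admits a CIS* (λ,μ)-partition. -/
open Finset

variable {α : Type*} [Fintype α] [DecidableEq α]

/-- every ASHG admitting a `(lam,mu)`-partition admits a CIS*
`(lam,mu)`-partition. -/
theorem statement8 {α : Type*} [Fintype α] [DecidableEq α] (lam mu : ℕ)
    (hlam : 0 < lam) (hlm : lam ≤ mu) (v : α → α → ℝ)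
    (hex : ∃ π : α → Finset α, IsSizedPartition lam mu π) :
    ∃ π : α → Finset α, IsCISstar lam mu v π := by
  classical
  -- take a sized partition maximizing social welfare
  set S : Finset (α → Finset α) :=
    Finset.univ.filter (fun π => IsSizedPartition lam mu π) with hS
  obtain ⟨π0, hπ0⟩ := hex
  have hS0 : π0 ∈ S := by simp [hS, hπ0]
  obtain ⟨π, hπS, hmax⟩ := Finset.exists_max_image S (SW v) ⟨π0, hS0⟩
  have hπ : IsSizedPartition lam mu π := by simpa [hS] using hπS
  refine ⟨π, hπ, ?_⟩
  rintro ⟨i, π', ⟨⟨⟨hpart, hpart', hne, herase⟩, hi⟩, hC, hI⟩, hsized'⟩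
  have hle : SW v π' ≤ SW v π := hmax π' (by simp [hS, hsized'])
  obtain ⟨hmem, hco⟩ := hpart
  obtain ⟨hmem', hco'⟩ := hpart'
  have key : ∀ j, utility v j (π j) ≤ utility v j (π' j) := by
    intro j
    by_cases hji : j = i
    · subst hji; exact le_of_lt hi
    · by_cases h1 : j ∈ π i
      · exact hC j (Finset.mem_erase.2 ⟨hji, h1⟩)
      · by_cases h2 : j ∈ π' i
        · exact hI j (Finset.mem_erase.2 ⟨hji, h2⟩)
        · have hni : i ∉ π j := by
            intro hij
            exact h1 ((hco j i hij) ▸ hmem j)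
          have hni' : i ∉ π' j := by
            intro hij
            exact h2 ((hco' j i hij) ▸ hmem' j)
          have : π j = π' j := by
            rw [← Finset.erase_eq_of_notMem hni, ← Finset.erase_eq_of_notMem hni',
              herase j hji]
          rw [this]
  have hlt : SW v π < SW v π' := by
    apply Finset.sum_lt_sum (fun j _ => key j)
    exact ⟨i, Finset.mem_univ i, hi⟩
  exact absurd hle (not_le.2 hlt)
end

section
/- Let μ ≥ 2 be an integer. Every ASHG admits a CIS (1,μ)-partition. -/
open Finset

variable {α : Type*} [Fintype α] [DecidableEq α]

lemma part_mem_symm {α : Type*} [DecidableEq α] {π : α → Finset α} (h : IsPartition π)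
    {i j : α} (hj : j ∈ π i) : i ∈ π j := (h.2 i j hj) ▸ h.1 i

/-- In a single-agent deviation, the old and new coalitions of the deviator meet only at `i`. -/
lemma dev_disjoint {α : Type*} [DecidableEq α] {π π' : α → Finset α} {i : α}
    (h : IsDeviation π π' i) {j : α} (hji : j ≠ i) (hj : j ∈ π i) : j ∉ π' i := by
  intro hj'
  obtain ⟨hπ, hπ', hne, herase⟩ := h
  apply hne
  have h1 : π j = π i := hπ.2 i j hj
  have h2 : π' j = π' i := hπ'.2 i j hj'
  have h3 := herase j hji
  rw [h1, h2] at h3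
  have : π i = insert i ((π i).erase i) := by
    rw [Finset.insert_erase (hπ.1 i)]
  have : π' i = insert i ((π' i).erase i) := by
    rw [Finset.insert_erase (hπ'.1 i)]
  rw [this, ← h3, Finset.insert_erase (hπ.1 i)]

/-- Case analysis for the coalition of an agent `j ≠ i` after `i`'s deviation. -/
lemma dev_cases {α : Type*} [DecidableEq α] {π π' : α → Finset α} {i : α}
    (h : IsDeviation π π' i) {j : α} (hji : j ≠ i) :
    (j ∈ π i ∧ π' j = (π i).erase i) ∨ (j ∈ π' i ∧ π j = (π' i).erase i) ∨
      (j ∉ π i ∧ j ∉ π' i ∧ π' j = π j) := by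
  obtain ⟨hπ, hπ', hne, herase⟩ := h
  by_cases hj : j ∈ π i
  · left
    refine ⟨hj, ?_⟩
    have hj' : j ∉ π' i := dev_disjoint ⟨hπ, hπ', hne, herase⟩ hji hj
    have hij' : i ∉ π' j := fun hc => hj' (part_mem_symm hπ' hc)
    have : π' j = (π' j).erase i := (Finset.erase_eq_of_notMem hij').symm
    rw [this, ← herase j hji, hπ.2 i j hj]
  · right
    by_cases hj' : j ∈ π' i
    · left
      refine ⟨hj', ?_⟩
      have hij : i ∉ π j := fun hc => hj (part_mem_symm hπ hc)
      have : π j = (π j).erase i := (Finset.erase_eq_of_notMem hij).symm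
      rw [this, herase j hji, hπ'.2 i j hj']
    · right
      refine ⟨hj, hj', ?_⟩
      have hij : i ∉ π j := fun hc => hj (part_mem_symm hπ hc)
      have hij' : i ∉ π' j := fun hc => hj' (part_mem_symm hπ' hc)
      rw [← Finset.erase_eq_of_notMem hij', ← herase j hji,
        Finset.erase_eq_of_notMem hij]

/-- for `mu ≥ 2`, every ASHG admits a CIS `(1,mu)`-partition. -/
theorem statement11 {α : Type*} [Fintype α] [DecidableEq α] (mu : ℕ) (hmu : 2 ≤ mu)
    (v : α → α → ℝ) :
    ∃ π : α → Finset α, IsCIS 1 mu v π := by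
  classical
  set S : Finset (α → Finset α) := Finset.univ.filter (fun π => IsSizedPartition 1 mu π)
    with hSdef
  have hmem : ∀ π, π ∈ S ↔ IsSizedPartition 1 mu π := by
    intro π; simp [hSdef]
  have hS : S.Nonempty := by
    refine ⟨fun i => {i}, (hmem _).2 ?_⟩
    refine ⟨⟨fun i => Finset.mem_singleton_self i, fun i j hj => by
      simp_all⟩, fun i => by simp; omega⟩
  obtain ⟨π, hπS, hmax⟩ := S.exists_max_image (SW v) hS
  have hπ : IsSizedPartition 1 mu π := (hmem π).1 hπS
  refine ⟨π, hπ, ?_⟩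
  rintro ⟨i, π', ⟨⟨hdev, himp⟩, hcontract, hindiv⟩, hperm⟩
  -- π' is a sized partition
  have hπ'part : IsPartition π' := hdev.2.1
  have hπ'sized : IsSizedPartition 1 mu π' := by
    refine ⟨hπ'part, fun j => ?_⟩
    by_cases hji : j = i
    · subst hji; exact hperm
    · rcases dev_cases hdev hji with ⟨hj, heq⟩ | ⟨hj, heq⟩ | ⟨_, _, heq⟩
      · rw [heq]
        constructor
        · exact Finset.card_pos.2 ⟨j, Finset.mem_erase.2 ⟨hji, hj⟩⟩
        · exact le_trans (Finset.card_le_card (Finset.erase_subset _ _)) (hπ.2 i).2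
      · rw [hπ'part.2 i j hj]
        exact hperm
      · rw [heq]; exact hπ.2 j
  -- social welfare strictly increases, contradicting maximality
  have hlt : SW v π < SW v π' := by
    apply Finset.sum_lt_sum
    · intro j _
      by_cases hji : j = i
      · subst hji; exact le_of_lt himp
      · rcases dev_cases hdev hji with ⟨hj, _⟩ | ⟨hj, _⟩ | ⟨_, _, heq⟩
        · exact hcontract j (Finset.mem_erase.2 ⟨hji, hj⟩)
        · exact hindiv j (Finset.mem_erase.2 ⟨hji, hj⟩)
        · rw [heq]
    · exact ⟨i, Finset.mem_univ i, himp⟩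
  exact absurd (hmax π' ((hmem π').2 hπ'sized)) (not_le.2 hlt)
end

section
/- Every ASHG admits a CNS (1,2)-partition. -/
open Finset

variable {α : Type*} [Fintype α] [DecidableEq α]

/-! ### Auxiliary machinery for `statement12` -/

section Statement12Aux

set_option linter.unusedSectionVars false

lemma stmt12_utility_singleton (v : α → α → ℝ) (i : α) : utility v i {i} = 0 := by
  simp [utility]

lemma stmt12_pair_erase_left (i k : α) (h : k ≠ i) : ({i, k} : Finset α).erase i = {k} := by
  rw [Finset.erase_insert (by simp [h.symm])]

lemma stmt12_utility_pair (v : α → α → ℝ) (i k : α) (h : k ≠ i) :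
    utility v i {i, k} = v i k := by
  rw [utility, stmt12_pair_erase_left i k h, Finset.sum_singleton]

lemma stmt12_struct {C : Finset α} {i : α} (hi : i ∈ C) (hc : C.card ≤ 2) :
    C = {i} ∨ ∃ b, b ≠ i ∧ C = {i, b} := by
  interval_cases h : C.card
  · simp_all [Finset.card_eq_zero]
  · left
    obtain ⟨a, ha⟩ := Finset.card_eq_one.mp h
    subst ha; simp_all
  · right
    obtain ⟨a, b, hab, hC⟩ := Finset.card_eq_two.mp h
    subst hC
    rcases Finset.mem_insert.mp hi with rfl | hi'
    · exact ⟨b, hab.symm, rfl⟩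
    · simp at hi'
      subst hi'
      exact ⟨a, hab, Finset.pair_comm a i⟩

/-- Invariant for the greedy pairing construction on a set `S` of agents. -/
def Stmt12Good (v : α → α → ℝ) (S : Finset α) (π : α → Finset α) : Prop :=
  (∀ i ∉ S, π i = {i}) ∧
  (∀ i ∈ S, i ∈ π i ∧ π i ⊆ S ∧ (π i).card ≤ 2 ∧ (∀ j ∈ π i, π j = π i)) ∧
  (∀ i ∈ S, π i = {i} → ∀ k ∈ S, k ≠ i → π k = {k} → v i k ≤ 0) ∧
  (∀ i ∈ S, ∀ b, b ≠ i → π i = {i, b} →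
    ((0 < v i b ∧ ∀ k ∈ S, k ≠ i → π k = {k} → v i k ≤ v i b) ∨
     (0 < v b i ∧ ∀ k ∈ S, k ≠ b → π k = {k} → v b k ≤ v b i)))

lemma stmt12_exists_good (v : α → α → ℝ) :
    ∀ n (S : Finset α), S.card = n → ∃ π : α → Finset α, Stmt12Good v S π := by
  intro n
  induction n using Nat.strong_induction_on with
  | _ n ih =>
    intro S hS
    by_cases hpos : ∃ p ∈ (S ×ˢ S).filter (fun p : α × α => p.1 ≠ p.2), 0 < v p.1 p.2
    · -- pick the pair with maximal value
      obtain ⟨p0, hp0, hp0pos⟩ := hpos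
      obtain ⟨p, hp, hmax⟩ := Finset.exists_max_image
        ((S ×ˢ S).filter (fun p : α × α => p.1 ≠ p.2)) (fun p => v p.1 p.2) ⟨p0, hp0⟩
      obtain ⟨a, b⟩ := p
      simp only [Finset.mem_filter, Finset.mem_product] at hp
      obtain ⟨⟨haS, hbS⟩, hab⟩ := hp
      have hvab : 0 < v a b := lt_of_lt_of_le hp0pos (hmax p0 hp0)
      -- recurse on S \ {a, b}
      set S' := S \ {a, b} with hS'
      have hcard : S'.card < n := by
        have hsub : ({a, b} : Finset α) ⊆ S := by
          intro x hx
          rcases Finset.mem_insert.mp hx with rfl | hx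
          · exact haS
          · simp at hx; exact hx ▸ hbS
        have h2 : ({a, b} : Finset α).card = 2 := Finset.card_pair hab
        have h3 := Finset.card_sdiff_of_subset hsub
        have h4 := Finset.card_le_card hsub
        rw [hS'] at *
        omega
      obtain ⟨π₀, hg⟩ := ih S'.card hcard S' rfl
      obtain ⟨hg0, hg1, hg2, hg3⟩ := hg
      classical
      refine ⟨fun i => if i = a ∨ i = b then {a, b} else π₀ i, ?_, ?_, ?_, ?_⟩
      · intro i hi
        have hia : i ≠ a := fun h => hi (h ▸ haS)
        have hib : i ≠ b := fun h => hi (h ▸ hbS)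
        simp only [hia, hib, or_self, if_false]
        exact hg0 i (by simp [hS', hi])
      · intro i hiS
        by_cases hiab : i = a ∨ i = b
        · simp only [hiab, if_true]
          refine ⟨?_, ?_, ?_, ?_⟩
          · rcases hiab with rfl | rfl <;> simp
          · intro x hx
            rcases Finset.mem_insert.mp hx with rfl | hx <;> simp_all
          · exact Finset.card_insert_le _ _ |>.trans (by simp)
          · intro j hj
            have : j = a ∨ j = b := by simpa using hj
            simp [this]
        · simp only [hiab, if_false]
          have hiS' : i ∈ S' := by
            simp only [hS', Finset.mem_sdiff, Finset.mem_insert, Finset.mem_singleton]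
            push_neg at hiab
            exact ⟨hiS, by tauto⟩
          obtain ⟨h1, h2, h3, h4⟩ := hg1 i hiS'
          refine ⟨h1, h2.trans (Finset.sdiff_subset), h3, ?_⟩
          intro j hj
          have hjS' : j ∈ S' := h2 hj
          have hjab : ¬(j = a ∨ j = b) := by
            simp only [hS', Finset.mem_sdiff, Finset.mem_insert, Finset.mem_singleton] at hjS'
            tauto
          simp only [hjab, if_false]
          exact h4 j hj
      · intro i hiS hisingle k hkS hki hksingle
        beta_reduce at hisingle hksingle
        have hiab : ¬(i = a ∨ i = b) := by
          intro h
          rw [if_pos h] at hisingle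
          rcases h with rfl | rfl
          · have : b ∈ ({i} : Finset α) := hisingle ▸ (by simp)
            simp at this; exact hab this.symm
          · have : a ∈ ({i} : Finset α) := hisingle ▸ (by simp)
            simp at this; exact hab this
        have hkab : ¬(k = a ∨ k = b) := by
          intro h
          rw [if_pos h] at hksingle
          rcases h with rfl | rfl
          · have : b ∈ ({k} : Finset α) := hksingle ▸ (by simp)
            simp at this; exact hab this.symm
          · have : a ∈ ({k} : Finset α) := hksingle ▸ (by simp)
            simp at this; exact hab this
        rw [if_neg hiab] at hisingle
        rw [if_neg hkab] at hksingle
        have hiS' : i ∈ S' := by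
          simp only [hS', Finset.mem_sdiff, Finset.mem_insert, Finset.mem_singleton]
          push_neg at hiab; exact ⟨hiS, by tauto⟩
        have hkS' : k ∈ S' := by
          simp only [hS', Finset.mem_sdiff, Finset.mem_insert, Finset.mem_singleton]
          push_neg at hkab; exact ⟨hkS, by tauto⟩
        exact hg2 i hiS' hisingle k hkS' hki hksingle
      · intro i hiS c hci hpair
        beta_reduce at hpair ⊢
        -- first, a helper: singletons of the new partition are singletons of π₀ in S'
        have hsingle : ∀ k ∈ S, k ≠ a → k ≠ b →
            ((if k = a ∨ k = b then ({a, b} : Finset α) else π₀ k) = {k} →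
              k ∈ S' ∧ π₀ k = {k}) := by
          intro k hkS hka hkb h
          rw [if_neg (by tauto)] at h
          refine ⟨?_, h⟩
          simp only [hS', Finset.mem_sdiff, Finset.mem_insert, Finset.mem_singleton]
          exact ⟨hkS, by tauto⟩
        have hsingle_ne : ∀ k ∈ S,
            (if k = a ∨ k = b then ({a, b} : Finset α) else π₀ k) = {k} →
              k ≠ a ∧ k ≠ b := by
          intro k hkS h
          constructor
          · rintro rfl
            rw [if_pos (Or.inl rfl)] at h
            have : b ∈ ({k} : Finset α) := h ▸ (by simp)
            simp at this; exact hab this.symm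
          · rintro rfl
            rw [if_pos (Or.inr rfl)] at h
            have : a ∈ ({k} : Finset α) := h ▸ (by simp)
            simp at this; exact hab this
        by_cases hiab : i = a ∨ i = b
        · rw [if_pos hiab] at hpair
          rcases hiab with rfl | rfl
          · -- i = a, so c = b
            have hcb : c = b := by
              have : c ∈ ({i, b} : Finset α) := hpair ▸ (by simp)
              rcases Finset.mem_insert.mp this with h | h
              · exact absurd h hci
              · simpa using h
            subst hcb
            left
            refine ⟨hvab, ?_⟩
            intro k hkS hki hksingle
            obtain ⟨hka, hkb⟩ := hsingle_ne k hkS hksingle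
            exact hmax (i, k) (by simp [Finset.mem_filter, hiS, hkS, Ne.symm hki])
          · -- i = b, so c = a
            have hca : c = a := by
              have : c ∈ ({a, i} : Finset α) := hpair ▸ (by simp)
              rcases Finset.mem_insert.mp this with h | h
              · simpa using h
              · simp at h; exact absurd h hci
            subst hca
            right
            refine ⟨hvab, ?_⟩
            intro k hkS hkc hksingle
            obtain ⟨hka, hkb⟩ := hsingle_ne k hkS hksingle
            exact hmax (c, k) (by simp [Finset.mem_filter, haS, hkS, Ne.symm hkc])
        · rw [if_neg hiab] at hpair
          have hiS' : i ∈ S' := by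
            simp only [hS', Finset.mem_sdiff, Finset.mem_insert, Finset.mem_singleton]
            push_neg at hiab; exact ⟨hiS, by tauto⟩
          have hres := hg3 i hiS' c hci hpair
          have hSS : S' ⊆ S := Finset.sdiff_subset
          rcases hres with ⟨h1, h2⟩ | ⟨h1, h2⟩
          · left
            refine ⟨h1, ?_⟩
            intro k hkS hki hksingle
            obtain ⟨hka, hkb⟩ := hsingle_ne k hkS hksingle
            obtain ⟨hkS', hk0⟩ := hsingle k hkS hka hkb hksingle
            exact h2 k hkS' hki hk0
          · right
            refine ⟨h1, ?_⟩
            intro k hkS hki hksingle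
            obtain ⟨hka, hkb⟩ := hsingle_ne k hkS hksingle
            obtain ⟨hkS', hk0⟩ := hsingle k hkS hka hkb hksingle
            exact h2 k hkS' hki hk0
    · -- no positive pair: all singletons
      push_neg at hpos
      refine ⟨fun i => {i}, ?_, ?_, ?_, ?_⟩
      · intro i _; rfl
      · intro i _
        exact ⟨by simp, by simp_all, by simp, by intro j hj; simp_all⟩
      · intro i hiS _ k hkS hki _
        exact hpos (i, k) (by simp [Finset.mem_filter, hiS, hkS, Ne.symm hki])
      · intro i hiS c hci hpair
        beta_reduce at hpair
        exfalso
        have : c ∈ ({i} : Finset α) := hpair ▸ (by simp)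
        simp at this; exact hci this

end Statement12Aux

/-- every ASHG admits a CNS `(1,2)`-partition. -/
theorem statement12 {α : Type*} [Fintype α] [DecidableEq α] (v : α → α → ℝ) :
    ∃ π : α → Finset α, IsCNS 1 2 v π := by
  obtain ⟨π, hg0, hg1, hg2, hg3⟩ := stmt12_exists_good v (Finset.univ : Finset α).card
    Finset.univ rfl
  have hmem : ∀ i, i ∈ π i := fun i => (hg1 i (Finset.mem_univ i)).1
  have hcard2 : ∀ i, (π i).card ≤ 2 := fun i => (hg1 i (Finset.mem_univ i)).2.2.1
  have hpart : ∀ i j, j ∈ π i → π j = π i := fun i j hj =>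
    (hg1 i (Finset.mem_univ i)).2.2.2 j hj
  refine ⟨π, ⟨⟨hmem, hpart⟩, fun i => ⟨Finset.card_pos.mpr ⟨i, hmem i⟩, hcard2 i⟩⟩, ?_⟩
  rintro ⟨i, π', ⟨⟨⟨-, hπ'p, hne, hrest⟩, himp⟩, hcontract⟩, hperm1, hperm2⟩
  -- Step 1: structure of π' i
  have hmem' : i ∈ π' i := hπ'p.1 i
  -- Key sublemma: any `k ≠ i` in `π' i` was a singleton in `π`.
  have keyB : ∀ k, k ≠ i → k ∈ π' i → π k = {k} := by
    intro k hki hk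
    have hπ'i : π' i = {i, k} := by
      refine (Finset.eq_of_subset_of_card_le ?_ ?_).symm
      · intro x hx
        rcases Finset.mem_insert.mp hx with rfl | hx
        · exact hmem'
        · simp at hx; exact hx ▸ hk
      · rw [Finset.card_pair (Ne.symm hki)]; exact hperm2
    have hπ'k : π' k = {i, k} := hπ'i ▸ hπ'p.2 i k (hπ'i ▸ (by simp))
    have herase : (π k).erase i = {k} := by
      rw [hrest k hki, hπ'k, stmt12_pair_erase_left i k hki]
    have hinotin : i ∉ π k := by
      intro hik
      have h1 : π i = π k := hpart k i hik
      have h2 : k ∈ π i := h1 ▸ hmem k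
      have h3 : π i = {i, k} := by
        refine (Finset.eq_of_subset_of_card_le ?_ ?_).symm
        · intro x hx
          rcases Finset.mem_insert.mp hx with h | hx
          · exact h ▸ hmem i
          · simp at hx; exact hx ▸ h2
        · rw [Finset.card_pair (Ne.symm hki)]; exact hcard2 i
      exact hne (hπ'i.trans h3.symm)
    rw [← herase, Finset.erase_eq_self.mpr hinotin]
  -- structure of π i
  rcases stmt12_struct (hmem i) (hcard2 i) with hsing | ⟨b, hbi, hpair⟩
  · -- i was a singleton
    have hu : utility v i (π i) = 0 := by rw [hsing, stmt12_utility_singleton]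
    rcases stmt12_struct hmem' hperm2 with h1 | ⟨k, hki, h1⟩
    · exact hne (h1.trans hsing.symm)
    · have hksing := keyB k hki (h1 ▸ (by simp))
      have hvik : v i k ≤ 0 :=
        hg2 i (Finset.mem_univ i) hsing k (Finset.mem_univ k) hki hksing
      rw [hu, h1, stmt12_utility_pair v i k hki] at himp
      linarith
  · -- i was in a pair {i, b}
    have hbmem : b ∈ π i := hpair ▸ (by simp)
    have hπb : π b = π i := hpart i b hbmem
    -- b is not in π' i
    have hbnot : b ∉ π' i := by
      intro hb
      have : π' i = {i, b} := by
        refine (Finset.eq_of_subset_of_card_le ?_ ?_).symm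
        · intro x hx
          rcases Finset.mem_insert.mp hx with rfl | hx
          · exact hmem'
          · simp at hx; exact hx ▸ hb
        · rw [Finset.card_pair hbi.symm]; exact hperm2
      exact hne (this.trans hpair.symm)
    -- hence π' b = {b}
    have hπ'b : π' b = {b} := by
      have hinotin : i ∉ π' b := by
        intro hib
        have h1 : π' i = π' b := hπ'p.2 b i hib
        exact hbnot (h1 ▸ hπ'p.1 b)
      have herase : (π' b).erase i = {b} := by
        rw [← hrest b hbi, hπb, hpair, stmt12_pair_erase_left i b hbi]
      rw [← herase, Finset.erase_eq_self.mpr hinotin]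
    -- contract condition for b
    have hbc : utility v b (π b) ≤ utility v b (π' b) :=
      hcontract b (by rw [hpair, stmt12_pair_erase_left i b hbi]; simp)
    rw [hπ'b, stmt12_utility_singleton, hπb, hpair, Finset.pair_comm,
      stmt12_utility_pair v b i hbi.symm] at hbc
    -- the disjunction from the invariant
    rcases hg3 i (Finset.mem_univ i) b hbi hpair with ⟨h1, h2⟩ | ⟨h1, -⟩
    · -- i was the proposer
      have hu : utility v i (π i) = v i b := by
        rw [hpair, stmt12_utility_pair v i b hbi]
      rcases stmt12_struct hmem' hperm2 with hs | ⟨k, hki, hk⟩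
      · rw [hu, hs, stmt12_utility_singleton] at himp; linarith
      · have hksing := keyB k hki (hk ▸ (by simp))
        have hvik : v i k ≤ v i b :=
          h2 k (Finset.mem_univ k) hki hksing
        rw [hu, hk, stmt12_utility_pair v i k hki] at himp
        linarith
    · -- b was the proposer: contract is violated
      linarith
end

section
/- Let λ ≤ μ be positive integers. In an ASHG with nonnegative valuations (i.e., v_i(j) ≥ 0 for all distinct agents i, j), a (λ,μ)-partition is CIS* if and only if it is CNS*. -/
open Finset

variable {α : Type*} [Fintype α] [DecidableEq α]

/-- in an ASHG with nonnegative valuations, a `(lam,mu)`-partition is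
CIS* iff it is CNS*. -/
theorem statement15 {α : Type*} [Fintype α] [DecidableEq α] (lam mu : ℕ)
    (hlam : 0 < lam) (hlm : lam ≤ mu) (v : α → α → ℝ)
    (hnn : ∀ i j, i ≠ j → 0 ≤ v i j)
    (π : α → Finset α) (hπ : IsSizedPartition lam mu π) :
    IsCISstar lam mu v π ↔ IsCNSstar lam mu v π := by
  constructor
  · rintro ⟨hsz, hno⟩
    refine ⟨hsz, ?_⟩
    rintro ⟨i, π', ⟨hnash, hcon⟩, hsz'⟩
    apply hno
    refine ⟨i, π', ⟨hnash, hcon, ?_⟩, hsz'⟩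
    -- show IndivOK
    obtain ⟨⟨hp, hp', hne, herase⟩, _⟩ := hnash
    intro j hj
    have hji : j ≠ i := Finset.ne_of_mem_erase hj
    have hjπ'i : j ∈ π' i := Finset.mem_of_mem_erase hj
    have hπ'j : π' j = π' i := hp'.2 i j hjπ'i
    have hjnotπi : j ∉ π i := by
      intro hjπi
      have hπj : π j = π i := hp.2 i j hjπi
      have h1 : (π' i).erase i = (π i).erase i := by
        rw [← hπ'j, ← herase j hji, hπj]
      apply hne
      have h2 : π' i = insert i ((π' i).erase i) :=
        (Finset.insert_erase (hp'.1 i)).symm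
      rw [h2, h1, Finset.insert_erase (hp.1 i)]
    have hinotπj : i ∉ π j := by
      intro hiπj
      exact hjnotπi (by rw [hp.2 j i hiπj]; exact hp.1 j)
    have hπjeq : π j = (π' i).erase i := by
      rw [← hπ'j, ← herase j hji, Finset.erase_eq_self.mpr hinotπj]
    have hπ'jeq : π' j = insert i (π j) := by
      rw [hπ'j, hπjeq, Finset.insert_erase (hp'.1 i)]
    rw [hπ'jeq]
    unfold utility
    rw [Finset.erase_insert_of_ne (Ne.symm hji),
      Finset.sum_insert (fun h => hinotπj (Finset.mem_of_mem_erase h))]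
    have := hnn j i hji
    linarith
  · rintro ⟨hsz, hno⟩
    refine ⟨hsz, ?_⟩
    rintro ⟨i, π', ⟨hnash, hcon, _⟩, hsz'⟩
    exact hno ⟨i, π', ⟨hnash, hcon⟩, hsz'⟩
end

section
/- Let μ ≥ 3 and k ≥ 2 be integers. Consider the symmetric ASHG on the 2k agents {a_1, b_1, …, a_k, b_k} with valuations v(a_i, b_i) = −1 for each i ∈ [k] and v = 1 for every other pair of distinct agents. The partition π = {{a_i, b_i} : i ∈ [k]} is an NS* (2,μ)-partition but is not a CIS (2,μ)-partition. -/
open Finset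

variable {α : Type*} [Fintype α] [DecidableEq α]

/-- Valuations for Statement 16: `v(a_i, b_i) = -1` and `v = 1` for every other
pair of distinct agents (symmetric). -/
noncomputable def exV (k : ℕ) : (Fin k ⊕ Fin k) → (Fin k ⊕ Fin k) → ℝ
  | .inl i, .inr j => if i = j then -1 else 1
  | .inr i, .inl j => if i = j then -1 else 1
  | .inl i, .inl j => if i = j then 0 else 1
  | .inr i, .inr j => if i = j then 0 else 1

/-- The partition into the pairs `{a_i, b_i}`. -/
def pairPart (k : ℕ) : (Fin k ⊕ Fin k) → Finset (Fin k ⊕ Fin k)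
  | .inl i => {Sum.inl i, Sum.inr i}
  | .inr i => {Sum.inl i, Sum.inr i}

section Aux

lemma erase_pair_left' {β : Type*} [DecidableEq β] {a b : β} (h : a ≠ b) :
    ({a, b} : Finset β).erase a = {b} := by
  rw [Finset.erase_insert (by simpa using h)]

lemma erase_pair_right' {β : Type*} [DecidableEq β] {a b : β} (h : a ≠ b) :
    ({a, b} : Finset β).erase b = {a} := by
  ext x
  simp only [Finset.mem_erase, Finset.mem_insert, Finset.mem_singleton]
  constructor
  · rintro ⟨hx, h1 | h1⟩
    · exact h1
    · exact absurd h1 hx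
  · rintro rfl
    exact ⟨h, Or.inl rfl⟩

/-- The partner of an agent. -/
def partner {k : ℕ} : (Fin k ⊕ Fin k) → (Fin k ⊕ Fin k)
  | .inl t => .inr t
  | .inr t => .inl t

lemma partner_ne {k : ℕ} (i : Fin k ⊕ Fin k) : i ≠ partner i := by
  rcases i with t | t <;> simp [partner]

lemma pairPart_eq_pair (k : ℕ) (i : Fin k ⊕ Fin k) :
    pairPart k i = {i, partner i} := by
  rcases i with t | t
  · rfl
  · exact Finset.pair_comm _ _

lemma pairPart_mem (k : ℕ) (x : Fin k ⊕ Fin k) : x ∈ pairPart k x := by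
  rw [pairPart_eq_pair]; simp

lemma pairPart_trans (k : ℕ) (i j : Fin k ⊕ Fin k) (h : j ∈ pairPart k i) :
    pairPart k j = pairPart k i := by
  rcases i with t | t <;> rcases j with s | s <;>
    simp_all [pairPart]

lemma pairPart_card (k : ℕ) (x : Fin k ⊕ Fin k) : (pairPart k x).card = 2 := by
  rw [pairPart_eq_pair, Finset.card_pair (partner_ne x)]

lemma pairPart_sized (k mu : ℕ) (hmu : 2 ≤ mu) : IsSizedPartition 2 mu (pairPart k) :=
  ⟨⟨pairPart_mem k, pairPart_trans k⟩, fun x => by rw [pairPart_card]; omega⟩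

lemma pairPart_erase_self (k : ℕ) (i : Fin k ⊕ Fin k) :
    (pairPart k i).erase i = {partner i} := by
  rw [pairPart_eq_pair]; exact erase_pair_left' (partner_ne i)

/-- The deviated partition: `a₀` joins `{a₁, b₁}`, leaving `b₀` alone. -/
def devPart (k : ℕ) (a b : Fin k) : (Fin k ⊕ Fin k) → Finset (Fin k ⊕ Fin k) := fun x =>
  if x = Sum.inl a ∨ x = Sum.inl b ∨ x = Sum.inr b
  then {Sum.inl a, Sum.inl b, Sum.inr b}
  else if x = Sum.inr a then {Sum.inr a} else pairPart k x

lemma devPart_partition (k : ℕ) {a b : Fin k} (hab : a ≠ b) :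
    IsPartition (devPart k a b) := by
  constructor
  · intro x
    unfold devPart
    split_ifs with h1 h2
    · rcases h1 with rfl | rfl | rfl <;> simp
    · subst h2; simp
    · exact pairPart_mem k x
  · intro i j hj
    unfold devPart at hj ⊢
    split_ifs at hj with h1 h2
    · have hc : j = Sum.inl a ∨ j = Sum.inl b ∨ j = Sum.inr b := by
        simpa using hj
      rw [if_pos hc, if_pos h1]
    · simp only [Finset.mem_singleton] at hj
      subst hj; subst h2; rfl
    · rcases i with t | t
      · push_neg at h1
        have ht1 : t ≠ a := fun h => h1.1 (by rw [h])
        have ht2 : t ≠ b := fun h => h1.2.1 (by rw [h])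
        have hj' : j = Sum.inl t ∨ j = Sum.inr t := by simpa [pairPart] using hj
        rcases hj' with rfl | rfl <;> simp [pairPart, ht1, ht2]
      · push_neg at h1
        have ht2 : t ≠ b := fun h => h1.2.2 (by rw [h])
        have ht1 : t ≠ a := fun h => h2 (by rw [h])
        have hj' : j = Sum.inl t ∨ j = Sum.inr t := by simpa [pairPart] using hj
        rcases hj' with rfl | rfl <;> simp [pairPart, ht1, ht2]

end Aux

section Aux2

variable (k : ℕ) (a b : Fin k)

lemma devPart_inl_a :
    devPart k a b (Sum.inl a) = {Sum.inl a, Sum.inl b, Sum.inr b} := by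
  simp [devPart]

lemma devPart_inl_b :
    devPart k a b (Sum.inl b) = {Sum.inl a, Sum.inl b, Sum.inr b} := by
  simp [devPart]

lemma devPart_inr_b :
    devPart k a b (Sum.inr b) = {Sum.inl a, Sum.inl b, Sum.inr b} := by
  simp [devPart]

lemma devPart_inr_a (hab : a ≠ b) :
    devPart k a b (Sum.inr a) = {Sum.inr a} := by
  simp [devPart, hab]

lemma devPart_other_inl {t : Fin k} (h1 : t ≠ a) (h2 : t ≠ b) :
    devPart k a b (Sum.inl t) = pairPart k (Sum.inl t) := by
  simp [devPart, h1, h2]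

lemma devPart_other_inr {t : Fin k} (h1 : t ≠ a) (h2 : t ≠ b) :
    devPart k a b (Sum.inr t) = pairPart k (Sum.inr t) := by
  simp [devPart, h1, h2]

lemma devPart_dev (hab : a ≠ b) :
    IsDeviation (pairPart k) (devPart k a b) (Sum.inl a) := by
  refine ⟨⟨pairPart_mem k, pairPart_trans k⟩, devPart_partition k hab, ?_, ?_⟩
  · rw [devPart_inl_a]
    intro h
    have hmem : (Sum.inr b : Fin k ⊕ Fin k) ∈ pairPart k (Sum.inl a) := by
      rw [← h]; simp
    rw [pairPart_eq_pair] at hmem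
    simp [partner, hab.symm] at hmem
  · intro j hj
    rcases j with t | t
    · by_cases ht : t = b
      · subst ht
        rw [devPart_inl_b, pairPart_eq_pair,
          Finset.erase_eq_self.mpr (by simp [partner, hab]),
          Finset.erase_insert (by simp [hab])]
        rfl
      · by_cases hta : t = a
        · exact absurd (by rw [hta]) hj
        · rw [devPart_other_inl k a b hta ht]
    · by_cases ht : t = b
      · subst ht
        rw [devPart_inr_b,
          Finset.erase_eq_self.mpr (by rw [pairPart_eq_pair]; simp [partner, hab]),
          Finset.erase_insert (by simp [hab])]
        rfl
      · by_cases hta : t = a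
        · rw [hta, devPart_inr_a k a b hab, pairPart_eq_pair,
            show partner (Sum.inr a) = (Sum.inl a : Fin k ⊕ Fin k) from rfl,
            erase_pair_right' (by simp : (Sum.inr a : Fin k ⊕ Fin k) ≠ Sum.inl a),
            Finset.erase_eq_self.mpr (by simp)]
        · rw [devPart_other_inr k a b hta ht]

lemma devPart_util (hab : a ≠ b) :
    utility (exV k) (Sum.inl a) (pairPart k (Sum.inl a)) <
      utility (exV k) (Sum.inl a) (devPart k a b (Sum.inl a)) := by
  have h1 : utility (exV k) (Sum.inl a) (pairPart k (Sum.inl a)) = -1 := by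
    simp only [utility]
    rw [pairPart_erase_self, show partner (Sum.inl a) = (Sum.inr a : Fin k ⊕ Fin k) from rfl,
      Finset.sum_singleton]
    simp [exV]
  have h2 : utility (exV k) (Sum.inl a) (devPart k a b (Sum.inl a)) = 2 := by
    simp only [utility]
    rw [devPart_inl_a, Finset.erase_insert (by simp [hab]),
      Finset.sum_pair (by simp : (Sum.inl b : Fin k ⊕ Fin k) ≠ Sum.inr b)]
    simp [exV, hab]
    ring
  rw [h1, h2]; norm_num

lemma devPart_contract (hab : a ≠ b) :
    ContractOK (exV k) (pairPart k) (devPart k a b) (Sum.inl a) := by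
  intro j hj
  rw [pairPart_erase_self] at hj
  simp only [partner, Finset.mem_singleton] at hj
  subst hj
  have h1 : utility (exV k) (Sum.inr a) (pairPart k (Sum.inr a)) = -1 := by
    simp only [utility]
    rw [pairPart_erase_self, show partner (Sum.inr a) = (Sum.inl a : Fin k ⊕ Fin k) from rfl,
      Finset.sum_singleton]
    simp [exV]
  have h2 : utility (exV k) (Sum.inr a) (devPart k a b (Sum.inr a)) = 0 := by
    simp only [utility]
    rw [devPart_inr_a k a b hab, Finset.erase_singleton, Finset.sum_empty]
  rw [h1, h2]; norm_num

lemma devPart_indiv (hab : a ≠ b) :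
    IndivOK (exV k) (pairPart k) (devPart k a b) (Sum.inl a) := by
  intro j hj
  rw [devPart_inl_a, Finset.erase_insert (by simp [hab])] at hj
  simp only [Finset.mem_insert, Finset.mem_singleton] at hj
  rcases hj with rfl | rfl
  · have h1 : utility (exV k) (Sum.inl b) (pairPart k (Sum.inl b)) = -1 := by
      simp only [utility]
      rw [pairPart_erase_self, show partner (Sum.inl b) = (Sum.inr b : Fin k ⊕ Fin k) from rfl,
        Finset.sum_singleton]
      simp [exV]
    have h2 : utility (exV k) (Sum.inl b) (devPart k a b (Sum.inl b)) = 0 := by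
      simp only [utility]
      rw [devPart_inl_b, Finset.erase_insert_of_ne (by simp [hab]),
        erase_pair_left' (by simp : (Sum.inl b : Fin k ⊕ Fin k) ≠ Sum.inr b),
        Finset.sum_pair (by simp [hab] : (Sum.inl a : Fin k ⊕ Fin k) ≠ Sum.inr b)]
      simp [exV, hab.symm]
    rw [h1, h2]; norm_num
  · have h1 : utility (exV k) (Sum.inr b) (pairPart k (Sum.inr b)) = -1 := by
      simp only [utility]
      rw [pairPart_erase_self, show partner (Sum.inr b) = (Sum.inl b : Fin k ⊕ Fin k) from rfl,
        Finset.sum_singleton]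
      simp [exV]
    have h2 : utility (exV k) (Sum.inr b) (devPart k a b (Sum.inr b)) = 0 := by
      simp only [utility]
      rw [devPart_inr_b, Finset.erase_insert_of_ne (by simp),
        erase_pair_right' (by simp : (Sum.inl b : Fin k ⊕ Fin k) ≠ Sum.inr b),
        Finset.sum_pair (by simp [hab] : (Sum.inl a : Fin k ⊕ Fin k) ≠ Sum.inl b)]
      simp [exV, hab.symm]
    rw [h1, h2]; norm_num

lemma devPart_perm (mu : ℕ) (hab : a ≠ b) (hmu : 3 ≤ mu) :
    Permissible 2 mu (devPart k a b) (Sum.inl a) := by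
  have hcard : (devPart k a b (Sum.inl a)).card = 3 := by
    rw [devPart_inl_a, Finset.card_insert_of_notMem (by simp [hab]),
      Finset.card_pair (by simp : (Sum.inl b : Fin k ⊕ Fin k) ≠ Sum.inr b)]
  rw [Permissible, hcard]
  omega

end Aux2

/-- for `mu ≥ 3` and `k ≥ 2`, the pair partition is an NS*
`(2,mu)`-partition but not a CIS `(2,mu)`-partition. -/
theorem statement16 (k mu : ℕ) (hk : 2 ≤ k) (hmu : 3 ≤ mu) :
    IsNSstar 2 mu (exV k) (pairPart k) ∧ ¬ IsCIS 2 mu (exV k) (pairPart k) := by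
  constructor
  · -- NS*
    refine ⟨pairPart_sized k mu (by omega), ?_⟩
    rintro ⟨i, π', ⟨⟨hπ, hπ', hne, herase⟩, -⟩, hsp'⟩
    set j : Fin k ⊕ Fin k := partner i with hjdef
    have hji : j ≠ i := (partner_ne i).symm
    have hjmem : j ∈ pairPart k i := by rw [pairPart_eq_pair]; simp [hjdef]
    by_cases hcase : j ∈ π' i
    · have h1 : π' j = π' i := hπ'.2 i j hcase
      have h2 : (pairPart k j).erase i = (π' j).erase i := herase j hji
      rw [pairPart_trans k i j hjmem, pairPart_erase_self, h1] at h2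
      apply hne
      have hi : i ∈ π' i := hπ'.1 i
      have h3 : insert i ((π' i).erase i) = π' i := Finset.insert_erase hi
      rw [← h2] at h3
      rw [← h3, pairPart_eq_pair]
    · have hinotin : i ∉ π' j := by
        intro hin
        have := hπ'.1 j
        rw [← hπ'.2 j i hin] at this
        exact hcase this
      have h2 : (pairPart k j).erase i = (π' j).erase i := herase j hji
      rw [pairPart_trans k i j hjmem, pairPart_erase_self,
        Finset.erase_eq_self.mpr hinotin] at h2
      have hcard := (hsp'.2 j).1
      rw [← h2] at hcard
      simp at hcard
  · -- not CIS
    rintro ⟨-, hno⟩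
    apply hno
    have h0 : 0 < k := by omega
    have h1 : 1 < k := by omega
    have hab : (⟨0, h0⟩ : Fin k) ≠ ⟨1, h1⟩ := Fin.ne_of_val_ne (by simp)
    exact ⟨Sum.inl ⟨0, h0⟩, devPart k ⟨0, h0⟩ ⟨1, h1⟩,
      ⟨⟨devPart_dev k _ _ hab, devPart_util k _ _ hab⟩, devPart_contract k _ _ hab,
        devPart_indiv k _ _ hab⟩, devPart_perm k _ _ mu hab hmu⟩
end

section
/- Let μ ≥ 2 be an integer. Consider the ASHG on the five agents x_1, …, x_5 with valuations v_{x_j}(x_{j'}) = 2 if j' ≡ j+1 (mod 5), v_{x_j}(x_{j'}) = 1 if j' ≡ j−1 (mod 5), and v_{x_j}(x_{j'}) = −6 for every other pair of distinct agents. This game admits no IS (1,μ)-partition. -/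
open Finset

variable {α : Type*} [Fintype α] [DecidableEq α]

/-- Valuations for Statement 18: on five agents, each agent values its cyclic
successor at `2`, its cyclic predecessor at `1`, and every other distinct agent
at `-6`. -/
noncomputable def bjV : Fin 5 → Fin 5 → ℝ := fun i j =>
  if (j : ℕ) = ((i : ℕ) + 1) % 5 then 2
  else if (j : ℕ) = ((i : ℕ) + 4) % 5 then 1
  else if i ≠ j then -6 else 0

set_option maxRecDepth 20000
section Statement18Aux

omit [Fintype α] in
lemma aux_single_partition {π : α → Finset α} (hp : IsPartition π) (i : α) :
    IsPartition (fun j => if j = i then ({i} : Finset α) else (π j).erase i) := by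
  constructor
  · intro j
    by_cases h : j = i
    · simp [h]
    · simp [h, Finset.mem_erase, hp.1 j]
  · intro k j hj
    by_cases hk : k = i
    · subst hk; simp at hj; simp [hj]
    · simp [hk] at hj
      obtain ⟨hji, hjk⟩ := hj
      have hh := hp.2 k j hjk
      simp [hji, hk, hh]

omit [Fintype α] in
lemma aux_join_partition {π : α → Finset α} (hp : IsPartition π) (i t : α) :
    IsPartition (fun j => if j ∈ insert i (π t) then insert i (π t) else (π j).erase i) := by
  constructor
  · intro j
    by_cases h : j ∈ insert i (π t)
    · simp [h]
    · have hji : j ≠ i := fun e => h (by simp [e])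
      simp [h, Finset.mem_erase, hji, hp.1 j]
  · intro k j hj
    by_cases hk : k ∈ insert i (π t)
    · simp [hk] at hj
      simp [hk, hj]
    · simp [hk] at hj
      obtain ⟨hji, hjk⟩ := hj
      have hpk := hp.2 k j hjk
      have hjmem : j ∉ insert i (π t) := by
        intro hmem
        rcases Finset.mem_insert.mp hmem with h1 | h2
        · exact hji h1
        · have h3 := hp.2 t j h2
          exact hk (Finset.mem_insert_of_mem (by rw [← h3, hpk]; exact hp.1 k))
      simp [hjmem, hk, hpk]

omit [Fintype α] in
lemma aux_dev_single {π : α → Finset α} (hp : IsPartition π) (i : α) (hne : π i ≠ {i}) :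
    IsDeviation π (fun j => if j = i then ({i} : Finset α) else (π j).erase i) i := by
  refine ⟨hp, aux_single_partition hp i, ?_, ?_⟩
  · simpa using Ne.symm hne
  · intro j hj
    simp [hj, Finset.erase_idem]

omit [Fintype α] in
lemma aux_dev_join {π : α → Finset α} (hp : IsPartition π) (i t : α) (hit : i ∉ π t) :
    IsDeviation π (fun j => if j ∈ insert i (π t) then insert i (π t) else (π j).erase i) i := by
  refine ⟨hp, aux_join_partition hp i t, ?_, ?_⟩
  · simp only [Finset.mem_insert_self, if_pos]
    intro h
    have ht : t ∈ π i := by rw [← h]; exact Finset.mem_insert_of_mem (hp.1 t)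
    have h2 := hp.2 i t ht
    exact hit (h2 ▸ hp.1 i)
  · intro j hj
    by_cases hm : j ∈ insert i (π t)
    · have hjt : j ∈ π t := by
        rcases Finset.mem_insert.mp hm with h | h
        · exact absurd h hj
        · exact h
      have hpj := hp.2 t j hjt
      simp only [hm, if_pos, hpj]
      rw [Finset.erase_insert hit, Finset.erase_eq_of_notMem hit]
    · simp [hm, Finset.erase_idem]

def bjZ : Fin 5 → Fin 5 → ℤ := fun i j =>
  if (j : ℕ) = ((i : ℕ) + 1) % 5 then 2
  else if (j : ℕ) = ((i : ℕ) + 4) % 5 then 1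
  else if i ≠ j then -6 else 0

lemma bjV_eq (i j : Fin 5) : bjV i j = (bjZ i j : ℝ) := by
  unfold bjV bjZ; split_ifs <;> norm_num

def Sz (i : Fin 5) (C : Finset (Fin 5)) : ℤ := ∑ j ∈ C.erase i, bjZ i j

lemma utility_eq (i : Fin 5) (C : Finset (Fin 5)) :
    utility bjV i C = (Sz i C : ℝ) := by
  unfold utility Sz
  push_cast
  exact Finset.sum_congr rfl fun j _ => bjV_eq i j

lemma aux_classify : ∀ (i : Fin 5) (C : Finset (Fin 5)), i ∈ C →
    (∀ j ∈ C, 0 ≤ Sz j C) → C = {i} ∨ C = {i, i+1} ∨ C = {i, i+4} := by decide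

lemma aux_core : ∀ c : Fin 5 → Fin 3, (∀ i, c i = 1 → c (i+1) = 2) →
    (∀ i, c i = 2 → c (i+4) = 1) → ∃ t, c t = 0 := by decide

lemma sz_single (i : Fin 5) : Sz i {i} = 0 := by simp [Sz]
lemma sz_pred : ∀ i : Fin 5, Sz i {i, i+4} = 1 := by decide
lemma sz_succ : ∀ i : Fin 5, Sz i {i, i+1} = 2 := by decide
lemma fin5a : ∀ i : Fin 5, i + 4 + 1 = i := by decide
lemma fin5b : ∀ i : Fin 5, i ≠ i + 1 := by decide
lemma fin5c : ∀ i : Fin 5, i ≠ i + 4 := by decide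
lemma dq1 : ∀ i : Fin 5, ({i, i+1} : Finset (Fin 5)) ≠ {i} := by decide
lemma dq2 : ∀ i : Fin 5, ({i, i+4} : Finset (Fin 5)) ≠ {i} := by decide
lemma dq3 : ∀ i : Fin 5, ({i, i+4} : Finset (Fin 5)) ≠ {i, i+1} := by decide
lemma dq4 : ∀ i : Fin 5, ({i, i+1} : Finset (Fin 5)) ≠ {i+1} := by decide
lemma dq5 : ∀ i : Fin 5, ({i, i+1} : Finset (Fin 5)) ≠ {i+1, i+1+1} := by decide

end Statement18Aux

/-- for `mu ≥ 2`, this five-agent game admits no IS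
`(1,mu)`-partition. -/
theorem statement18 (mu : ℕ) (hmu : 2 ≤ mu) :
    ¬ ∃ π : Fin 5 → Finset (Fin 5), IsIS 1 mu bjV π := by
  rintro ⟨π, ⟨⟨hp, hsz⟩, hno⟩⟩
  -- Step 1: every agent has nonnegative utility, else it deviates to a singleton
  have hnn : ∀ i, 0 ≤ Sz i (π i) := by
    intro i
    by_contra hlt
    push_neg at hlt
    have hne : π i ≠ {i} := by
      intro h
      rw [h, sz_single] at hlt
      exact absurd hlt (lt_irrefl 0)
    set π' : Fin 5 → Finset (Fin 5) :=
      fun j => if j = i then ({i} : Finset (Fin 5)) else (π j).erase i with hπ'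
    have hπ'i : π' i = {i} := by simp [hπ']
    refine hno ⟨i, π', ⟨⟨aux_dev_single hp i hne, ?_⟩, ?_⟩, ?_, ?_⟩
    · rw [hπ'i, utility_eq, utility_eq, sz_single]
      exact_mod_cast hlt
    · intro j hj
      rw [hπ'i] at hj
      simp at hj
    · rw [hπ'i]; simp
    · rw [hπ'i]; simpa using le_trans one_le_two hmu
  -- Step 2: each coalition is a singleton or an adjacent pair
  have hclass : ∀ i, π i = {i} ∨ π i = {i, i+1} ∨ π i = {i, i+4} := by
    intro i
    exact aux_classify i (π i) (hp.1 i) (fun j hj => by rw [← hp.2 i j hj]; exact hnn j)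
  -- Step 3: some coalition is a singleton
  set c : Fin 5 → Fin 3 := fun i => if π i = {i} then 0 else if π i = {i, i+1} then 1 else 2
    with hc
  have cv1 : ∀ i, π i = {i} → c i = 0 := fun i h => by simp [hc, h]
  have cv2 : ∀ i, π i = {i, i+1} → c i = 1 := fun i h => by simp [hc, h, dq1 i]
  have cv3 : ∀ i, π i = {i, i+4} → c i = 2 := fun i h => by simp [hc, h, dq2 i, dq3 i]
  have hc1 : ∀ i, c i = 1 → π i = {i, i+1} := by
    intro i h
    rcases hclass i with h' | h' | h'
    · exact absurd ((cv1 i h').symm.trans h) (by decide)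
    · exact h'
    · exact absurd ((cv3 i h').symm.trans h) (by decide)
  have hc2 : ∀ i, c i = 2 → π i = {i, i+4} := by
    intro i h
    rcases hclass i with h' | h' | h'
    · exact absurd ((cv1 i h').symm.trans h) (by decide)
    · exact absurd ((cv2 i h').symm.trans h) (by decide)
    · exact h'
  have hcc1 : ∀ i, c i = 1 → c (i+1) = 2 := by
    intro i h
    have hi := hc1 i h
    have hmem : (i+1) ∈ π i := by rw [hi]; simp
    have hp1 : π (i+1) = {i, i+1} := by rw [hp.2 i (i+1) hmem, hi]
    simp [hc, hp1, dq4 i, dq5 i]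
  have hcc2 : ∀ i, c i = 2 → c (i+4) = 1 := by
    intro i h
    have hi := hc2 i h
    have hmem : (i+4) ∈ π i := by rw [hi]; simp
    have hp1 : π (i+4) = {i+4, i+4+1} := by
      rw [hp.2 i (i+4) hmem, hi, fin5a i]
      exact Finset.pair_comm i (i+4)
    simp [hc, hp1, dq1 (i+4)]
  obtain ⟨t, ht⟩ := aux_core c hcc1 hcc2
  have hπt : π t = {t} := by
    rcases hclass t with h' | h' | h'
    · exact h'
    · exact absurd ((cv2 t h').symm.trans ht) (by decide)
    · exact absurd ((cv3 t h').symm.trans ht) (by decide)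
  -- Step 4: agent t+4 joins the singleton {t}
  set i : Fin 5 := t + 4 with hi
  have hit : i ≠ t := by rw [hi]; exact Ne.symm (fin5c t)
  have hi1 : i + 1 = t := by rw [hi]; exact fin5a t
  have hnpair : π i ≠ {i, i+1} := by
    intro hcon
    have hmem : (i+1) ∈ π i := by rw [hcon]; simp
    have h2 := hp.2 i (i+1) hmem
    rw [hi1, hπt, hcon] at h2
    have h3 : i ∈ ({t} : Finset (Fin 5)) := by rw [h2]; simp
    rw [Finset.mem_singleton] at h3
    exact hit h3
  have hszi : Sz i (π i) ≤ 1 := by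
    rcases hclass i with h | h | h
    · rw [h, sz_single]; norm_num
    · exact absurd h hnpair
    · rw [h, sz_pred]
  have hinotin : i ∉ π t := by rw [hπt]; simpa using hit
  set π' : Fin 5 → Finset (Fin 5) :=
    fun j => if j ∈ insert i (π t) then insert i (π t) else (π j).erase i with hπ'
  have hπ'i : π' i = insert i (π t) := by simp [hπ']
  have hπ'it : π' i = {i, t} := by rw [hπ'i, hπt]
  have hπ't : π' t = {i, t} := by
    have : t ∈ insert i (π t) := Finset.mem_insert_of_mem (hp.1 t)
    rw [hπ']; simp only [this, if_pos]; rw [hπt]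
  have hit2 : ({i, t} : Finset (Fin 5)) = {i, i+1} := by rw [hi1]
  refine hno ⟨i, π', ⟨⟨aux_dev_join hp i t hinotin, ?_⟩, ?_⟩, ?_, ?_⟩
  · rw [hπ'it, hit2, utility_eq, utility_eq, sz_succ]
    exact_mod_cast lt_of_le_of_lt hszi (by norm_num)
  · intro j hj
    rw [hπ'it] at hj
    have hjt : j = t := by
      rcases Finset.mem_erase.mp hj with ⟨hji, hjm⟩
      rcases Finset.mem_insert.mp hjm with h | h
      · exact absurd h hji
      · simpa using h
    rw [hjt, hπt, hπ't, utility_eq, utility_eq, sz_single]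
    have h5 : ({i, t} : Finset (Fin 5)) = {t, t+4} := by
      rw [hi]; exact Finset.pair_comm (t+4) t
    rw [h5, sz_pred]
    norm_num
  · rw [hπ'it, Finset.card_pair hit]
    exact one_le_two
  · rw [hπ'it, Finset.card_pair hit]
    exact hmu
end
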